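/- arXiv:2406.06522 — 2 statements merged into one kernel-verified Lean document; each statement's English description precedes it below -/
import Mathlib

section
/- For every κ ∈ (0,8) with cos(4π/κ) < 0 (equivalently ν(κ) > 0) and every x₁ < x₂ < x₃ < x₄: ν(κ)² Z_a^(κ)(x) + ν(κ) Z_b^(κ)(x) > 0 and ν(κ) Z_a^(κ)(x) + ν(κ)² Z_b^(κ)(x) > 0. -/
/-- Rising factorial (Pochhammer symbol) `(q)ₙ = q(q+1)⋯(q+n−1)`. -/
noncomputable def risingFac (q : ℝ) (n : ℕ) : ℝ := ∏ i ∈ Finset.range n, (q + (i : ℝ))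

/-- Gauss hypergeometric function `₂F₁(a,b,c;z)`, defined as the sum of its power series. -/
noncomputable def hyp2F1 (a b c z : ℝ) : ℝ :=
  ∑' n : ℕ, risingFac a n * risingFac b n / (risingFac c n * (Nat.factorial n : ℝ)) * z ^ n

/-- Conformal weight `h(κ) = (6−κ)/(2κ)`. -/
noncomputable def hParam (κ : ℝ) : ℝ := (6 - κ) / (2 * κ)

/-- Loop fugacity `ν(κ) = −2cos(4π/κ)`. -/
noncomputable def nuParam (κ : ℝ) : ℝ := -2 * Real.cos (4 * Real.pi / κ)

/-- Cross-ratio `χ = ((x₂−x₁)(x₄−x₃))/((x₃−x₁)(x₄−x₂))`. -/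
noncomputable def crossRatio (x₁ x₂ x₃ x₄ : ℝ) : ℝ :=
  ((x₂ - x₁) * (x₄ - x₃)) / ((x₃ - x₁) * (x₄ - x₂))

/-- Pure partition function `Z_a^(κ)` of multiple SLE_κ (N = 2). -/
noncomputable def Za (κ x₁ x₂ x₃ x₄ : ℝ) : ℝ :=
  (x₂ - x₁) ^ (-(2 * hParam κ)) * (x₄ - x₃) ^ (-(2 * hParam κ)) *
    (1 - crossRatio x₁ x₂ x₃ x₄) ^ (2 / κ) *
    (hyp2F1 (4/κ) (1 - 4/κ) (8/κ) (1 - crossRatio x₁ x₂ x₃ x₄) /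
      hyp2F1 (4/κ) (1 - 4/κ) (8/κ) 1)

/-- Pure partition function `Z_b^(κ)` of multiple SLE_κ (N = 2). -/
noncomputable def Zb (κ x₁ x₂ x₃ x₄ : ℝ) : ℝ :=
  (x₄ - x₁) ^ (-(2 * hParam κ)) * (x₃ - x₂) ^ (-(2 * hParam κ)) *
    (crossRatio x₁ x₂ x₃ x₄) ^ (2 / κ) *
    (hyp2F1 (4/κ) (1 - 4/κ) (8/κ) (crossRatio x₁ x₂ x₃ x₄) /
      hyp2F1 (4/κ) (1 - 4/κ) (8/κ) 1)

/-- The fused three-point function `Z₃^(κ)(ξ,x₃,x₄)`. -/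
noncomputable def Z3 (κ ξ x₃ x₄ : ℝ) : ℝ :=
  (x₄ - x₃) ^ (2/κ) * (x₃ - ξ) ^ (1 - 8/κ) * (x₄ - ξ) ^ (1 - 8/κ) /
    hyp2F1 (4/κ) (1 - 4/κ) (8/κ) 1


/-!
For `c > 0`, `c - a > 0`, `c - b > 0` and `s = c - a - b > 0`, the series `₂F₁(a,b;c;z)` is
positive on `[0,1]`. Multiplying by the binomial series `₂F₁(s,1;1;z) = (1-z)^(-s)` gives
`₂F₁(c-a,c-b;c;z)` (Euler's transformation); coefficientwise this is the Pfaff–Saalschütz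
identity, proved by a Wilf–Zeilberger telescoping. The coefficients of `₂F₁(c-a,c-b;c;z)` are
those of `(1-z)^(-s)` times the partial products of `∏ (1 + ab/((c+k)(s+k)))`, a convergent
product of positive factors, so they dominate `ε` times them. Hence `₂F₁(a,b;c;z) ≥ ε` on
`[0,1)`, and Abel's theorem (the series converges at `1` by Raabe's test, as `s > 0`) extends
this to `z = 1`. For `κ ∈ (0,8)` the parameters `(4/κ, 1-4/κ, 8/κ)` qualify, so
`Z_a, Z_b > 0`.
-/

open Finset Filter Topology
open scoped Nat

lemma risingFac_zero (q : ℝ) : risingFac q 0 = 1 := prod_range_zero _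

lemma risingFac_succ (q : ℝ) (n : ℕ) : risingFac q (n + 1) = risingFac q n * (q + n) :=
  prod_range_succ _ n

lemma risingFac_add (q : ℝ) (m n : ℕ) :
    risingFac q (m + n) = risingFac q m * risingFac (q + m) n := by
  simp only [risingFac, prod_range_add, Nat.cast_add, add_assoc]

lemma risingFac_succ' (q : ℝ) (n : ℕ) : risingFac q (n + 1) = q * risingFac (q + 1) n := by
  rw [add_comm n, risingFac_add, Nat.cast_one, risingFac, prod_range_one, Nat.cast_zero, add_zero]

lemma risingFac_pos {q : ℝ} (hq : 0 < q) (n : ℕ) : 0 < risingFac q n :=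
  prod_pos fun _ _ => by positivity

lemma risingFac_one (n : ℕ) : risingFac 1 n = n ! := by
  induction n with
  | zero => simp [risingFac_zero]
  | succ n ih => rw [risingFac_succ, ih, Nat.factorial_succ]; push_cast; ring

noncomputable def hyp2F1Coeff (a b c : ℝ) (n : ℕ) : ℝ :=
  risingFac a n * risingFac b n / (risingFac c n * n !)

section Coefficients

variable (a b c : ℝ)

lemma hyp2F1_eq_tsum (z : ℝ) : hyp2F1 a b c z = ∑' n, hyp2F1Coeff a b c n * z ^ n := rfl

lemma hyp2F1Coeff_zero : hyp2F1Coeff a b c 0 = 1 := by simp [hyp2F1Coeff, risingFac_zero]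

lemma hyp2F1Coeff_succ (n : ℕ) :
    hyp2F1Coeff a b c (n + 1) =
      hyp2F1Coeff a b c n * ((a + n) * (b + n) / ((c + n) * (n + 1))) := by
  simp only [hyp2F1Coeff, risingFac_succ, Nat.factorial_succ, Nat.cast_mul, Nat.cast_succ,
    div_mul_div_comm]
  ring

lemma hyp2F1Coeff_one_one (n : ℕ) : hyp2F1Coeff a 1 1 n = risingFac a n / n ! := by
  have : (n ! : ℝ) ≠ 0 := by positivity
  rw [hyp2F1Coeff, risingFac_one]
  field_simp

variable {a b c}

lemma hyp2F1Coeff_pos (ha : 0 < a) (hb : 0 < b) (hc : 0 < c) (n : ℕ) :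
    0 < hyp2F1Coeff a b c n := by
  have := risingFac_pos ha n; have := risingFac_pos hb n; have := risingFac_pos hc n
  unfold hyp2F1Coeff; positivity

end Coefficients

lemma tendsto_hyp2F1_ratio (a b c : ℝ) :
    Tendsto (fun n : ℕ => (a + n) * (b + n) / ((c + n) * (n + 1))) atTop (𝓝 1) := by
  have h (p q : ℝ) : Tendsto (fun n : ℕ => (p + n) / (q + n)) atTop (𝓝 1) := by
    simpa using tendsto_add_mul_div_add_mul_atTop_nhds p q (1 : ℝ) one_ne_zero
  simpa [mul_div_mul_comm, add_comm _ (1 : ℝ)] using (h a c).mul (h b 1)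

theorem summable_norm_hyp2F1Coeff_mul_pow (a b c : ℝ) {z : ℝ} (hz : |z| < 1) :
    Summable fun n => ‖hyp2F1Coeff a b c n * z ^ n‖ := by
  obtain ⟨r, hzr, hr1⟩ := exists_between hz
  have hlim : Tendsto (fun n : ℕ => |z| * |(a + n) * (b + n) / ((c + n) * (n + 1))|) atTop
      (𝓝 (|z| * |1|)) := ((tendsto_hyp2F1_ratio a b c).abs).const_mul _
  rw [abs_one, mul_one] at hlim
  refine summable_of_ratio_norm_eventually_le hr1 ?_
  filter_upwards [hlim.eventually_le_const hzr] with n hn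
  simp only [Real.norm_eq_abs, abs_abs, hyp2F1Coeff_succ, pow_succ, abs_mul]
  calc |hyp2F1Coeff a b c n| * |(a + n) * (b + n) / ((c + n) * (n + 1))| * (|z ^ n| * |z|)
      = |z| * |(a + n) * (b + n) / ((c + n) * (n + 1))| * (|hyp2F1Coeff a b c n| * |z ^ n|) := by
        ring
    _ ≤ r * (|hyp2F1Coeff a b c n| * |z ^ n|) := by gcongr

lemma rpow_mul_sub_le_mul_rpow (n : ℕ) {p : ℝ} (hp : 1 ≤ p) :
    ((n : ℝ) + 1) ^ p * (n + 1 - p) ≤ (n + 1) * (n : ℝ) ^ p := by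
  have hn : (0 : ℝ) < n + 1 := by positivity
  have hbern := one_add_mul_self_le_rpow_one_add (s := -1 / (n + 1))
    (by rw [neg_div, neg_le_neg_iff, div_le_one hn]; linarith) hp
  rw [show 1 + -1 / ((n : ℝ) + 1) = n / (n + 1) by field_simp; ring,
    Real.div_rpow (by positivity) hn.le, le_div_iff₀ (by positivity)] at hbern
  calc ((n : ℝ) + 1) ^ p * (n + 1 - p) = (n + 1) * ((1 + p * (-1 / (n + 1))) * (n + 1) ^ p) := by
        field_simp; ring
    _ ≤ (n + 1) * (n : ℝ) ^ p := by gcongr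

theorem summable_of_raabe {u : ℕ → ℝ} {p : ℝ} (hp : 1 < p)
    (h : ∀ᶠ n : ℕ in atTop, |u (n + 1)| * (n + 1) ≤ |u n| * (n + 1 - p)) : Summable u := by
  obtain ⟨N, hN⟩ := eventually_atTop.1 h
  set v : ℕ → ℝ := fun n => |u n| * (n : ℝ) ^ p
  have hv : ∀ n ≥ N, v (n + 1) ≤ v n := fun n hn => by
    refine le_of_mul_le_mul_right ?_ (by positivity : (0 : ℝ) < n + 1)
    calc v (n + 1) * (n + 1) = |u (n + 1)| * (n + 1) * ((n : ℝ) + 1) ^ p := by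
          simp only [v]; push_cast; ring
      _ ≤ |u n| * (n + 1 - p) * ((n : ℝ) + 1) ^ p :=
          mul_le_mul_of_nonneg_right (hN n hn) (by positivity)
      _ = |u n| * (((n : ℝ) + 1) ^ p * (n + 1 - p)) := by ring
      _ ≤ |u n| * ((n + 1) * (n : ℝ) ^ p) :=
          mul_le_mul_of_nonneg_left (rpow_mul_sub_le_mul_rpow n hp.le) (abs_nonneg _)
      _ = v n * (n + 1) := by ring
  have hvN : ∀ d, v (N + d) ≤ v N := fun d =>
    antitone_nat_of_succ_le (f := fun d => v (N + d)) (fun d => hv (N + d) (by omega))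
      (Nat.zero_le d)
  refine Summable.of_norm_bounded_eventually_nat
    ((Real.summable_nat_rpow_inv.2 hp).mul_left (v N)) ?_
  filter_upwards [eventually_ge_atTop (N + 1)] with n hn
  obtain ⟨d, rfl⟩ := Nat.exists_eq_add_of_le (Nat.le_of_succ_le hn)
  have hpos : (0 : ℝ) < ((N + d : ℕ) : ℝ) ^ p := Real.rpow_pos_of_pos (by norm_cast; omega) p
  rw [Real.norm_eq_abs, ← div_eq_mul_inv, le_div_iff₀ hpos]
  exact hvN d

theorem summable_hyp2F1Coeff {a b c : ℝ} (hc : 0 < c) (hs : 0 < c - a - b) :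
    Summable (hyp2F1Coeff a b c) := by
  refine summable_of_raabe (p := 1 + (c - a - b) / 2) (by linarith) ?_
  have hM := tendsto_natCast_atTop_atTop (R := ℝ).eventually_ge_atTop
    (|a| + |b| + c + 2 * |a * b| / (c - a - b))
  filter_upwards [hM] with n hn
  have hq : 0 ≤ 2 * |a * b| / (c - a - b) := by positivity
  have ha : 0 ≤ a + n := by linarith [neg_abs_le a, abs_nonneg b]
  have hb : 0 ≤ b + n := by linarith [neg_abs_le b, abs_nonneg a]
  have hdom : (a + n) * (b + n) ≤ (c + n) * (n + 1 - (1 + (c - a - b) / 2)) := by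
    have : 2 * |a * b| ≤ (c - a - b) * (n - c) := by
      rw [← div_le_iff₀' hs]; linarith [abs_nonneg a, abs_nonneg b]
    nlinarith [le_abs_self (a * b)]
  have hcn : (0 : ℝ) < c + n := by positivity
  rw [hyp2F1Coeff_succ, abs_mul, abs_of_nonneg (div_nonneg (mul_nonneg ha hb) (by positivity)),
    mul_assoc, div_mul_eq_mul_div, mul_div_mul_right _ _ (by positivity : (n : ℝ) + 1 ≠ 0)]
  gcongr
  rw [div_le_iff₀ hcn]
  linarith

section Saalschuetz

variable (a b c : ℝ)

noncomputable def saalschuetzTerm (k j : ℕ) : ℝ :=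
  risingFac a k * risingFac b k * risingFac (c - a - b) j * risingFac (c + k) j / (k ! * j !)

noncomputable def saalschuetzCert (k j : ℕ) : ℝ :=
  k * risingFac a k * risingFac b k * risingFac (c - a - b) j * risingFac (c + k - 1) j /
    (k ! * j !)

lemma saalschuetzTerm_succ_right (k j : ℕ) :
    saalschuetzTerm a b c k (j + 1) =
      saalschuetzTerm a b c k j * ((c - a - b + j) * (c + k + j) / (j + 1)) := by
  simp only [saalschuetzTerm, risingFac_succ, Nat.factorial_succ, Nat.cast_mul, Nat.cast_succ,
    div_mul_div_comm]
  ring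

lemma saalschuetzCert_succ_right (k j : ℕ) :
    saalschuetzCert a b c k (j + 1) =
      saalschuetzTerm a b c k j * (k * (c + k - 1) * (c - a - b + j) / (j + 1)) := by
  simp only [saalschuetzCert, saalschuetzTerm, risingFac_succ (c - a - b),
    risingFac_succ' (c + k - 1), sub_add_cancel, Nat.factorial_succ, Nat.cast_mul, Nat.cast_succ,
    div_mul_div_comm]
  ring

lemma saalschuetzCert_succ_left (k j : ℕ) :
    saalschuetzCert a b c (k + 1) j = saalschuetzTerm a b c k j * ((a + k) * (b + k)) := by
  have hk : ((k : ℝ) + 1) ≠ 0 := by positivity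
  simp only [saalschuetzCert, saalschuetzTerm, risingFac_succ, Nat.factorial_succ, Nat.cast_mul,
    Nat.cast_succ, add_sub_assoc, sub_self, add_zero]
  field_simp

lemma saalschuetzTerm_wz (k j : ℕ) :
    (k + j + 1) * saalschuetzTerm a b c k (j + 1) -
        (c - a + (k + j)) * (c - b + (k + j)) * saalschuetzTerm a b c k j =
      saalschuetzCert a b c k (j + 1) - saalschuetzCert a b c (k + 1) j := by
  have hj : (j : ℝ) + 1 ≠ 0 := by positivity
  rw [saalschuetzTerm_succ_right, saalschuetzCert_succ_right, saalschuetzCert_succ_left]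
  field_simp
  ring

theorem sum_saalschuetzTerm (n : ℕ) :
    ∑ k ∈ range (n + 1), saalschuetzTerm a b c k (n - k) =
      risingFac (c - a) n * risingFac (c - b) n / n ! := by
  induction n with
  | zero => simp [saalschuetzTerm, risingFac_zero]
  | succ n ih =>
    have hn : (n : ℝ) + 1 ≠ 0 := by positivity
    have htel : ∑ k ∈ range (n + 1),
        (saalschuetzCert a b c k (n + 1 - k) - saalschuetzCert a b c (k + 1) (n + 1 - (k + 1))) =
          -saalschuetzCert a b c (n + 1) 0 := by
      rw [sum_range_sub', Nat.sub_self]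
      simp [saalschuetzCert]
    have hwz : ∀ k ∈ range (n + 1), (n + 1) * saalschuetzTerm a b c k (n + 1 - k) =
        (c - a + n) * (c - b + n) * saalschuetzTerm a b c k (n - k) +
          (saalschuetzCert a b c k (n + 1 - k) -
            saalschuetzCert a b c (k + 1) (n + 1 - (k + 1))) := fun k hk => by
      obtain ⟨j, rfl⟩ := Nat.exists_eq_add_of_le (Nat.lt_succ_iff.1 (mem_range.1 hk))
      rw [show k + j + 1 - k = j + 1 by omega, show k + j + 1 - (k + 1) = j by omega,
        Nat.add_sub_cancel_left, ← saalschuetzTerm_wz]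
      push_cast; ring
    have hlast : (n + 1) * saalschuetzTerm a b c (n + 1) 0 = saalschuetzCert a b c (n + 1) 0 := by
      simp only [saalschuetzTerm, saalschuetzCert, risingFac_zero]
      push_cast; ring
    apply mul_left_cancel₀ hn
    rw [sum_range_succ, Nat.sub_self, mul_add, mul_sum, sum_congr rfl hwz, sum_add_distrib, htel,
      ← mul_sum, ih, hlast, risingFac_succ, risingFac_succ, Nat.factorial_succ]
    push_cast
    field_simp
    ring

end Saalschuetz

section Euler

variable {a b c : ℝ}

lemma hyp2F1Coeff_mul_hyp2F1Coeff_one_one (hc : 0 < c) (k j : ℕ) :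
    hyp2F1Coeff a b c k * hyp2F1Coeff (c - a - b) 1 1 j =
      saalschuetzTerm a b c k j / risingFac c (k + j) := by
  have := risingFac_pos hc k
  have : 0 < risingFac (c + k) j := risingFac_pos (by positivity) j
  rw [hyp2F1Coeff_one_one, hyp2F1Coeff, saalschuetzTerm, risingFac_add]
  field_simp

theorem sum_antidiagonal_hyp2F1Coeff_mul (hc : 0 < c) (n : ℕ) :
    ∑ p ∈ antidiagonal n, hyp2F1Coeff a b c p.1 * hyp2F1Coeff (c - a - b) 1 1 p.2 =
      hyp2F1Coeff (c - a) (c - b) c n := by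
  rw [Nat.sum_antidiagonal_eq_sum_range_succ_mk]
  have hk : ∀ k ∈ range (n + 1), hyp2F1Coeff a b c k * hyp2F1Coeff (c - a - b) 1 1 (n - k) =
      saalschuetzTerm a b c k (n - k) / risingFac c n := fun k hk => by
    rw [hyp2F1Coeff_mul_hyp2F1Coeff_one_one hc,
      Nat.add_sub_cancel' (Nat.lt_succ_iff.1 (mem_range.1 hk))]
  rw [sum_congr rfl hk, ← sum_div, sum_saalschuetzTerm, hyp2F1Coeff, div_div,
    mul_comm (n ! : ℝ)]

theorem hyp2F1_mul_hyp2F1_one_one (hc : 0 < c) {z : ℝ} (hz : |z| < 1) :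
    hyp2F1 a b c z * hyp2F1 (c - a - b) 1 1 z = hyp2F1 (c - a) (c - b) c z := by
  simp only [hyp2F1_eq_tsum]
  rw [tsum_mul_tsum_eq_tsum_sum_antidiagonal_of_summable_norm
    (summable_norm_hyp2F1Coeff_mul_pow a b c hz) (summable_norm_hyp2F1Coeff_mul_pow _ 1 1 hz)]
  refine tsum_congr fun n => ?_
  rw [← sum_antidiagonal_hyp2F1Coeff_mul hc n, sum_mul]
  refine sum_congr rfl fun p hp => ?_
  rw [← mem_antidiagonal.1 hp, pow_add]
  ring

end Euler

theorem exists_pos_le_prod_range {r : ℕ → ℝ} (hr : ∀ k, 0 < r k)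
    (hsum : Summable fun k => r k - 1) : ∃ ε > 0, ∀ n, ε ≤ ∏ k ∈ range n, r k := by
  have hlog : Summable fun k => Real.log (r k) := by
    simpa using Real.summable_log_one_add_of_summable hsum
  obtain ⟨m, hm⟩ := hlog.hasSum.tendsto_sum_nat.bddBelow_range
  refine ⟨Real.exp m, Real.exp_pos m, fun n => ?_⟩
  rw [← Real.exp_log (prod_pos fun k _ => hr k), Real.log_prod fun k _ => (hr k).ne']
  exact Real.exp_le_exp.2 (hm ⟨n, rfl⟩)

section Comparison

variable {a b c : ℝ}

lemma hyp2F1Coeff_eq_mul_prod (hc : 0 < c) (hs : 0 < c - a - b) (n : ℕ) :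
    hyp2F1Coeff (c - a) (c - b) c n = hyp2F1Coeff (c - a - b) 1 1 n *
      ∏ k ∈ range n, (c - a + k) * (c - b + k) / ((c + k) * (c - a - b + k)) := by
  induction n with
  | zero => simp [hyp2F1Coeff_zero]
  | succ n ih =>
    have : (0 : ℝ) < c + n := by positivity
    have : (0 : ℝ) < c - a - b + n := by positivity
    rw [hyp2F1Coeff_succ, hyp2F1Coeff_succ, ih, prod_range_succ]
    field_simp

lemma summable_mul_div_mul_sub_one {x y c s : ℝ} (hc : 0 < c) (hs : 0 < s)
    (hsum : x + y = c + s) :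
    Summable fun k : ℕ => (x + k) * (y + k) / ((c + k) * (s + k)) - 1 := by
  refine Summable.of_norm_bounded_eventually_nat
    ((Real.summable_one_div_nat_pow.2 one_lt_two).mul_left |x * y - c * s|) ?_
  filter_upwards [eventually_gt_atTop 0] with k hk
  have hk' : (0 : ℝ) < k := by exact_mod_cast hk
  have hden : (k : ℝ) ^ 2 ≤ (c + k) * (s + k) := by nlinarith
  have hsub : (x + k) * (y + k) / ((c + k) * (s + k)) - 1 =
      (x * y - c * s) / ((c + k) * (s + k)) := by
    field_simp
    linear_combination (k : ℝ) * hsum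
  rw [hsub, Real.norm_eq_abs, abs_div, abs_of_pos (by positivity : (0 : ℝ) < (c + k) * (s + k)),
    mul_one_div]
  gcongr

theorem exists_pos_mul_hyp2F1Coeff_le (hc : 0 < c) (hca : 0 < c - a) (hcb : 0 < c - b)
    (hs : 0 < c - a - b) :
    ∃ ε > 0, ∀ n, ε * hyp2F1Coeff (c - a - b) 1 1 n ≤ hyp2F1Coeff (c - a) (c - b) c n := by
  have hr (k : ℕ) : 0 < (c - a + k) * (c - b + k) / ((c + k) * (c - a - b + k)) := by
    have hk : (0 : ℝ) ≤ k := k.cast_nonneg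
    exact div_pos (mul_pos (by linarith) (by linarith)) (mul_pos (by linarith) (by linarith))
  obtain ⟨ε, hε, hprod⟩ := exists_pos_le_prod_range hr
    (summable_mul_div_mul_sub_one hc hs (show c - a + (c - b) = c + (c - a - b) by ring))
  refine ⟨ε, hε, fun n => ?_⟩
  rw [hyp2F1Coeff_eq_mul_prod hc hs, mul_comm]
  exact mul_le_mul_of_nonneg_left (hprod n) (hyp2F1Coeff_pos hs one_pos one_pos n).le

end Comparison

section Positivity

variable {a b c : ℝ}

lemma one_le_hyp2F1 (ha : 0 < a) (hb : 0 < b) (hc : 0 < c) {z : ℝ}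
    (hz : z ∈ Set.Ico (0 : ℝ) 1) :
    1 ≤ hyp2F1 a b c z := by
  have hsum := (summable_norm_hyp2F1Coeff_mul_pow a b c
    (by rw [abs_of_nonneg hz.1]; exact hz.2 : |z| < 1)).of_norm
  calc (1 : ℝ) = hyp2F1Coeff a b c 0 * z ^ 0 := by rw [hyp2F1Coeff_zero, pow_zero, one_mul]
    _ ≤ hyp2F1 a b c z :=
      hsum.le_tsum 0 fun n _ => mul_nonneg (hyp2F1Coeff_pos ha hb hc n).le (pow_nonneg hz.1 n)

theorem exists_pos_le_hyp2F1 (hc : 0 < c) (hca : 0 < c - a) (hcb : 0 < c - b)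
    (hs : 0 < c - a - b) : ∃ ε > 0, ∀ z ∈ Set.Ico (0 : ℝ) 1, ε ≤ hyp2F1 a b c z := by
  obtain ⟨ε, hε, hcoeff⟩ := exists_pos_mul_hyp2F1Coeff_le hc hca hcb hs
  refine ⟨ε, hε, fun z hz => ?_⟩
  have hz' : |z| < 1 := by rw [abs_of_nonneg hz.1]; exact hz.2
  have hE := one_le_hyp2F1 hs one_pos one_pos hz
  refine le_of_mul_le_mul_right ?_ (one_pos.trans_le hE)
  rw [hyp2F1_mul_hyp2F1_one_one hc hz', hyp2F1_eq_tsum, hyp2F1_eq_tsum, ← tsum_mul_left]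
  refine Summable.tsum_le_tsum (fun n => ?_)
    ((summable_norm_hyp2F1Coeff_mul_pow _ 1 1 hz').of_norm.mul_left ε)
    (summable_norm_hyp2F1Coeff_mul_pow _ _ c hz').of_norm
  rw [← mul_assoc]
  exact mul_le_mul_of_nonneg_right (hcoeff n) (pow_nonneg hz.1 n)

theorem hyp2F1_pos (hc : 0 < c) (hca : 0 < c - a) (hcb : 0 < c - b) (hs : 0 < c - a - b)
    {z : ℝ} (hz : z ∈ Set.Icc (0 : ℝ) 1) : 0 < hyp2F1 a b c z := by
  obtain ⟨ε, hε, hle⟩ := exists_pos_le_hyp2F1 hc hca hcb hs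
  refine hε.trans_le ?_
  rcases hz.2.lt_or_eq with hz1 | rfl
  · exact hle z ⟨hz.1, hz1⟩
  have habel := Real.tendsto_tsum_powerSeries_nhdsWithin_lt
    (summable_hyp2F1Coeff hc hs).hasSum.tendsto_sum_nat
  rw [hyp2F1_eq_tsum]
  simp only [one_pow, mul_one]
  refine ge_of_tendsto habel ?_
  filter_upwards [Ioo_mem_nhdsLT zero_lt_one] with z hz
  exact hle z ⟨hz.1.le, hz.2⟩

end Positivity

section PartitionFunctions

variable {κ x₁ x₂ x₃ x₄ : ℝ}

lemma crossRatio_mem_Ioo (h12 : x₁ < x₂) (h23 : x₂ < x₃) (h34 : x₃ < x₄) :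
    crossRatio x₁ x₂ x₃ x₄ ∈ Set.Ioo 0 1 := by
  have hden : 0 < (x₃ - x₁) * (x₄ - x₂) := mul_pos (by linarith) (by linarith)
  rw [crossRatio, Set.mem_Ioo, div_lt_one hden]
  exact ⟨div_pos (mul_pos (by linarith) (by linarith)) hden,
    by nlinarith [mul_pos (sub_pos.2 h23) (sub_pos.2 (h12.trans h23 |>.trans h34))]⟩

lemma hyp2F1_kappa_pos (hκ0 : 0 < κ) (hκ8 : κ < 8) {z : ℝ} (hz : z ∈ Set.Icc (0 : ℝ) 1) :
    0 < hyp2F1 (4 / κ) (1 - 4 / κ) (8 / κ) z := by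
  have h8 : 1 < 8 / κ := (one_lt_div hκ0).2 hκ8
  refine hyp2F1_pos (by positivity) ?_ ?_ ?_ hz
  · rw [show 8 / κ - 4 / κ = 4 / κ by ring]; positivity
  · rw [show 8 / κ - (1 - 4 / κ) = 8 / κ + 4 / κ - 1 by ring]
    linarith [show 0 < 4 / κ by positivity]
  · rw [show 8 / κ - 4 / κ - (1 - 4 / κ) = 8 / κ - 1 by ring]; linarith

lemma Za_pos (hκ0 : 0 < κ) (hκ8 : κ < 8) (h12 : x₁ < x₂) (h23 : x₂ < x₃)
    (h34 : x₃ < x₄) :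
    0 < Za κ x₁ x₂ x₃ x₄ := by
  obtain ⟨hχ0, hχ1⟩ := crossRatio_mem_Ioo h12 h23 h34
  have hF := hyp2F1_kappa_pos hκ0 hκ8 (z := 1 - crossRatio x₁ x₂ x₃ x₄)
    ⟨by linarith, by linarith⟩
  have hF1 := hyp2F1_kappa_pos hκ0 hκ8 (z := 1) ⟨zero_le_one, le_rfl⟩
  have := Real.rpow_pos_of_pos (sub_pos.2 h12) (-(2 * hParam κ))
  have := Real.rpow_pos_of_pos (sub_pos.2 h34) (-(2 * hParam κ))
  have := Real.rpow_pos_of_pos (sub_pos.2 hχ1) (2 / κ)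
  unfold Za; positivity

lemma Zb_pos (hκ0 : 0 < κ) (hκ8 : κ < 8) (h12 : x₁ < x₂) (h23 : x₂ < x₃)
    (h34 : x₃ < x₄) :
    0 < Zb κ x₁ x₂ x₃ x₄ := by
  obtain ⟨hχ0, hχ1⟩ := crossRatio_mem_Ioo h12 h23 h34
  have hF := hyp2F1_kappa_pos hκ0 hκ8 (z := crossRatio x₁ x₂ x₃ x₄) ⟨hχ0.le, hχ1.le⟩
  have hF1 := hyp2F1_kappa_pos hκ0 hκ8 (z := 1) ⟨zero_le_one, le_rfl⟩
  have := Real.rpow_pos_of_pos (by linarith : 0 < x₄ - x₁) (-(2 * hParam κ))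
  have := Real.rpow_pos_of_pos (sub_pos.2 h23) (-(2 * hParam κ))
  have := Real.rpow_pos_of_pos hχ0 (2 / κ)
  unfold Zb; positivity

end PartitionFunctions

/-- positivity of the Coulomb gas integrals `ν²Z_a + νZ_b` and
`νZ_a + ν²Z_b` when `cos(4π/κ) < 0` (equivalently `ν(κ) > 0`). -/
theorem statement1 (κ : ℝ) (hκ : κ ∈ Set.Ioo (0:ℝ) 8)
    (hcos : Real.cos (4 * Real.pi / κ) < 0)
    (x₁ x₂ x₃ x₄ : ℝ) (h12 : x₁ < x₂) (h23 : x₂ < x₃) (h34 : x₃ < x₄) :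
    0 < nuParam κ ^ 2 * Za κ x₁ x₂ x₃ x₄ + nuParam κ * Zb κ x₁ x₂ x₃ x₄ ∧
    0 < nuParam κ * Za κ x₁ x₂ x₃ x₄ + nuParam κ ^ 2 * Zb κ x₁ x₂ x₃ x₄ := by
  have hν : 0 < nuParam κ := by rw [nuParam]; linarith
  have hZa := Za_pos hκ.1 hκ.2 h12 h23 h34
  have hZb := Zb_pos hκ.1 hκ.2 h12 h23 h34
  constructor <;> positivity
end

section
/- Fix κ ∈ (0,8) and real numbers ξ < x₃ < x₄. Then, as (x₁,x₂) → (ξ,ξ) with x₁ < x₂ (< x₃), the ratio Z_b^(κ)(x₁,x₂,x₃,x₄)/(x₂−x₁)^{2/κ} converges to Z₃^(κ)(ξ,x₃,x₄); equivalently, Z_b^(κ)(x₁,x₂,x₃,x₄) = (x₂−x₁)^{2/κ} Z₃^(κ)(ξ,x₃,x₄) + o((x₂−x₁)^{2/κ}) as x₁, x₂ → ξ. -/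
open Filter Topology

section OrdinaryHypergeometric

variable {𝕂 : Type*} (𝔸 : Type*) [RCLike 𝕂] [NormedDivisionRing 𝔸] [NormedAlgebra 𝕂 𝔸]
  (a b c : 𝕂)

theorem ordinaryHypergeometricSeries_radius_pos :
    0 < (ordinaryHypergeometricSeries 𝔸 a b c).radius := by
  by_cases h : ∃ k : ℕ, (k : 𝕂) = -a ∨ (k : 𝕂) = -b ∨ (k : 𝕂) = -c
  · obtain ⟨k, hk | hk | hk⟩ := h
    · rw [show a = -(k : 𝕂) by rw [hk, neg_neg], ordinaryHypergeometric_radius_top_of_neg_nat₁]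
      exact ENNReal.zero_lt_top
    · rw [show b = -(k : 𝕂) by rw [hk, neg_neg], ordinaryHypergeometric_radius_top_of_neg_nat₂]
      exact ENNReal.zero_lt_top
    · rw [show c = -(k : 𝕂) by rw [hk, neg_neg], ordinaryHypergeometric_radius_top_of_neg_nat₃]
      exact ENNReal.zero_lt_top
  · push Not at h
    rw [ordinaryHypergeometricSeries_radius_eq_one 𝔸 a b c h]
    exact one_pos

theorem continuousAt_ordinaryHypergeometric_zero [CompleteSpace 𝔸] :
    ContinuousAt (₂F₁ a b c : 𝔸 → 𝔸) 0 :=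
  ((ordinaryHypergeometricSeries 𝔸 a b c).hasFPowerSeriesOnBall
    (ordinaryHypergeometricSeries_radius_pos 𝔸 a b c)).hasFPowerSeriesAt.continuousAt

end OrdinaryHypergeometric

theorem risingFac_eq_ascPochhammer_eval (q : ℝ) (n : ℕ) :
    risingFac q n = (ascPochhammer ℝ n).eval q := by
  induction n with
  | zero => simp [risingFac]
  | succ n ih => rw [risingFac, Finset.prod_range_succ, ← risingFac, ih, ascPochhammer_succ_eval]

theorem hyp2F1_eq_ordinaryHypergeometric (a b c : ℝ) : hyp2F1 a b c = ₂F₁ a b c := by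
  rw [ordinaryHypergeometric_eq_tsum]
  refine funext fun z => tsum_congr fun n => ?_
  simp only [risingFac_eq_ascPochhammer_eval, smul_eq_mul]
  ring

theorem continuousAt_hyp2F1_zero (a b c : ℝ) : ContinuousAt (hyp2F1 a b c) 0 := by
  rw [hyp2F1_eq_ordinaryHypergeometric]
  exact continuousAt_ordinaryHypergeometric_zero ℝ a b c

theorem crossRatio_eq_mul (x₁ x₂ x₃ x₄ : ℝ) :
    crossRatio x₁ x₂ x₃ x₄ = (x₂ - x₁) * ((x₄ - x₃) / ((x₃ - x₁) * (x₄ - x₂))) :=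
  mul_div_assoc _ _ _

/-- `Zb κ x₁ x₂ x₃ x₄ / (x₂ - x₁) ^ (2/κ)`, written in a form that extends continuously to `x₁ = x₂`. -/
noncomputable def ZbRescaled (κ x₁ x₂ x₃ x₄ : ℝ) : ℝ :=
  (x₄ - x₁) ^ (-(2 * hParam κ)) * (x₃ - x₂) ^ (-(2 * hParam κ)) *
    ((x₄ - x₃) / ((x₃ - x₁) * (x₄ - x₂))) ^ (2 / κ) *
    (hyp2F1 (4/κ) (1 - 4/κ) (8/κ) (crossRatio x₁ x₂ x₃ x₄) /
      hyp2F1 (4/κ) (1 - 4/κ) (8/κ) 1)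

theorem Zb_eq_rpow_mul_ZbRescaled (κ : ℝ) {x₁ x₂ x₃ x₄ : ℝ} (h12 : x₁ < x₂) (h23 : x₂ < x₃)
    (h34 : x₃ < x₄) : Zb κ x₁ x₂ x₃ x₄ = (x₂ - x₁) ^ (2 / κ) * ZbRescaled κ x₁ x₂ x₃ x₄ := by
  have hq : 0 ≤ (x₄ - x₃) / ((x₃ - x₁) * (x₄ - x₂)) :=
    div_nonneg (by linarith) (mul_nonneg (by linarith) (by linarith))
  rw [Zb, ZbRescaled, crossRatio_eq_mul x₁, Real.mul_rpow (by linarith) hq]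
  ring

theorem ZbRescaled_self {κ : ℝ} (hκ : κ ≠ 0) {ξ x₃ x₄ : ℝ} (hξ : ξ < x₃) (h34 : x₃ < x₄) :
    ZbRescaled κ ξ ξ x₃ x₄ = Z3 κ ξ x₃ x₄ := by
  have hu : 0 < x₃ - ξ := by linarith
  have hv : 0 < x₄ - ξ := by linarith
  have hexp : 1 - 8 / κ = -(2 * hParam κ) - 2 / κ := by
    rw [hParam]; field_simp; ring
  rw [ZbRescaled, Z3, crossRatio_eq_mul, sub_self, zero_mul, hyp2F1_eq_ordinaryHypergeometric,
    ordinaryHypergeometric_zero, Real.div_rpow (by linarith) (by positivity),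
    Real.mul_rpow hu.le hv.le, hexp, Real.rpow_sub hu, Real.rpow_sub hv]
  field_simp

theorem continuousAt_ZbRescaled (κ : ℝ) {ξ x₃ x₄ : ℝ} (hξ : ξ < x₃) (h34 : x₃ < x₄) :
    ContinuousAt (fun p : ℝ × ℝ => ZbRescaled κ p.1 p.2 x₃ x₄) (ξ, ξ) := by
  have hu : x₃ - ξ ≠ 0 := by linarith
  have hv : x₄ - ξ ≠ 0 := by linarith
  have hχ : ContinuousAt (fun p : ℝ × ℝ => crossRatio p.1 p.2 x₃ x₄) (ξ, ξ) := by
    unfold crossRatio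
    exact ContinuousAt.div (by fun_prop) (by fun_prop) (mul_ne_zero hu hv)
  have hF := (continuousAt_hyp2F1_zero (4/κ) (1 - 4/κ) (8/κ)).comp_of_eq hχ
    (by simp [crossRatio])
  unfold ZbRescaled
  refine ContinuousAt.mul (ContinuousAt.mul (ContinuousAt.mul ?_ ?_) ?_) (hF.div_const _)
  · exact (continuousAt_const.sub continuousAt_fst).rpow_const (Or.inl (by simpa using hv))
  · exact (continuousAt_const.sub continuousAt_snd).rpow_const (Or.inl (by simpa using hu))
  · exact ContinuousAt.rpow_const (by fun_prop (disch := exact mul_ne_zero hu hv))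
      (Or.inl (div_ne_zero (by linarith) (mul_ne_zero hu hv)))

/-- as `(x₁,x₂) → (ξ,ξ)` with `x₁ < x₂ < x₃`, the ratio
`Z_b^(κ)(x₁,x₂,x₃,x₄)/(x₂−x₁)^{2/κ}` converges to `Z₃^(κ)(ξ,x₃,x₄)`. -/
theorem statement3 (κ : ℝ) (hκ : κ ∈ Set.Ioo (0:ℝ) 8)
    (ξ x₃ x₄ : ℝ) (hξ : ξ < x₃) (h34 : x₃ < x₄) :
    Filter.Tendsto
      (fun p : ℝ × ℝ => Zb κ p.1 p.2 x₃ x₄ / (p.2 - p.1) ^ (2/κ))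
      ((nhds ξ ×ˢ nhds ξ) ⊓ Filter.principal {p : ℝ × ℝ | p.1 < p.2 ∧ p.2 < x₃})
      (nhds (Z3 κ ξ x₃ x₄)) := by
  rw [← ZbRescaled_self hκ.1.ne' hξ h34]
  refine ((continuousAt_ZbRescaled κ hξ h34).tendsto.mono_left ?_).congr' ?_
  · rw [nhds_prod_eq]
    exact inf_le_left
  · filter_upwards [mem_inf_of_right (mem_principal_self _)] with p ⟨h12, h23⟩
    rw [Zb_eq_rpow_mul_ZbRescaled κ h12 h23 h34,
      mul_div_cancel_left₀ _ (Real.rpow_pos_of_pos (sub_pos.2 h12) _).ne']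
end
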